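/- Let s, a : Fin c → ℝ be monotone nondecreasing (sorted cost lists of length c). Define the multiset T of all sums s(i) + a(k) for pairs with (i+1)·(k+1) ≤ c (1-indexed product at most c). Then T contains the c smallest elements of the full multiset {s(i) + a(k) : i, k ∈ Fin c}; that is, every element of the full multiset that is strictly smaller than the maximum of the c smallest elements appears in T with at least the same multiplicity. -/

import Mathlib

/-!
A pair `(i, k)` with `(i + 1) * (k + 1) > c` has at least `c` pairs `(i', k') ≤ (i, k)`
componentwise, and by monotonicity each of them has sum `≤ s i + a k`. Hence `s i + a k` is at
least the `c`-th smallest combined sum, so the pairs outside `T` contribute no value strictly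
below it.
-/

open Finset

theorem List.Pairwise.countP_le_of_lt_getElem {α : Type*} [LinearOrder α] {L : List α}
    (hL : L.Pairwise (· ≤ ·)) (v : α) {i : ℕ} (hi : i < L.length) (hv : v < L[i]) :
    L.countP (· ≤ v) ≤ i := by
  induction L generalizing i with
  | nil => simp at hi
  | cons y L ih =>
    rw [List.pairwise_cons] at hL
    cases i with
    | zero =>
      simpa using ⟨hv, fun z hz => hv.trans_le (hL.1 z hz)⟩
    | succ i =>
      have := ih hL.2 (by simpa using hi) hv
      rw [List.countP_cons]
      split <;> omega

theorem Multiset.getD_sort_le_of_le_card_filter {α : Type*} [LinearOrder α] (M : Multiset α)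
    (v d : α) {m : ℕ} (hm : 0 < m) (hcard : m ≤ card (M.filter (· ≤ v))) :
    (M.sort (· ≤ ·)).getD (m - 1) d ≤ v := by
  have hsort_count : (M.sort (· ≤ ·)).countP (· ≤ v) = card (M.filter (· ≤ v)) := by
    rw [← Multiset.countP_eq_card_filter, ← Multiset.coe_countP, Multiset.sort_eq]
  have hlen : m - 1 < (M.sort (· ≤ ·)).length := by
    rw [Multiset.length_sort]
    have := Multiset.card_le_card (Multiset.filter_le (· ≤ v) M)
    omega
  rw [List.getD_eq_getElem _ _ hlen]
  by_contra! hlt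
  have := (M.pairwise_sort _).countP_le_of_lt_getElem v hlen hlt
  omega

theorem Finset.card_Iic_le_card_filter_le {ι α : Type*} [Preorder ι] [LocallyFiniteOrderBot ι]
    [Fintype ι] [Preorder α] [DecidableLE α] {f : ι → α} (hf : Monotone f) (p : ι) :
    #(Iic p) ≤ #{q | f q ≤ f p} :=
  card_le_card fun q hq => by simpa using hf (mem_Iic.mp hq)

theorem Multiset.count_map_eq_count_map_filter {β α : Type*} [DecidableEq α] (M : Multiset β)
    (g : β → α) (P : β → Prop) [DecidablePred P] (x : α) (h : ∀ p ∈ M, ¬ P p → g p ≠ x) :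
    (M.map g).count x = ((M.filter P).map g).count x := by
  rw [Multiset.count_map, Multiset.count_map, Multiset.filter_filter]
  congr 1
  refine Multiset.filter_congr fun p hp => ⟨fun hx => ⟨hx, ?_⟩, And.left⟩
  by_contra hP
  exact h p hp hP hx.symm

/-- For sorted cost lists `s` and `a` of length `c`, every sum `s i + a k`
strictly smaller than the `c`-th smallest of all `c²` combined sums occurs,
with at least the same multiplicity, among the pairs whose 1-indexed index
product is at most `c`: the `c` smallest combined sums are found in `T`. -/
theorem top_c_combinations {c : ℕ} (hc : 0 < c) (s a : Fin c → ℝ)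
    (hs : Monotone s) (ha : Monotone a) :
    let F : Multiset ℝ := (univ : Finset (Fin c × Fin c)).val.map (fun p => s p.1 + a p.2)
    let T : Multiset ℝ := ((univ : Finset (Fin c × Fin c)).filter
        (fun p => (p.1.val + 1) * (p.2.val + 1) ≤ c)).val.map (fun p => s p.1 + a p.2)
    ∀ x : ℝ, x < (F.sort (· ≤ ·)).getD (c - 1) 0 → F.count x ≤ T.count x := by
  intro F T x hx
  have hsum : Monotone fun p : Fin c × Fin c => s p.1 + a p.2 :=
    fun p q hpq => add_le_add (hs hpq.1) (ha hpq.2)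
  have hlarge : ∀ p : Fin c × Fin c, c < (p.1.val + 1) * (p.2.val + 1) →
      (F.sort (· ≤ ·)).getD (c - 1) 0 ≤ s p.1 + a p.2 := by
    intro p hp
    refine F.getD_sort_le_of_le_card_filter _ 0 hc ?_
    simp only [F, Multiset.filter_map, Multiset.card_map]
    calc c ≤ (p.1.val + 1) * (p.2.val + 1) := hp.le
      _ = #(Iic p) := by rw [card_Iic_prod, Fin.card_Iic, Fin.card_Iic]
      _ ≤ _ := card_Iic_le_card_filter_le hsum p
  refine (Multiset.count_map_eq_count_map_filter _ _ _ x fun p _ hp hpx => ?_).le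
  exact (hx.trans_le (hlarge p (not_le.mp hp))).ne hpx.symm
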